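/- Let C be a triangulated category with a weight structure w, and let l \le m be integers. Then the class C_{[l,m]} = C_{w\ge l} \cap C_{w\le m} is the smallest retract-closed, extension-closed subclass of objects of C containing the union of the hearts C_{w=j} for l \le j \le m. -/

import Mathlib

/-!
For `l < m`, an object `X` of `C_{[l,m]}` is an extension of an object of `C_{[l+1,m]}` by one
of the heart `C_{w=l}`: in a weight decomposition `A → X → B → A⟦1⟧` with `A ∈ C_{w ≤ l}` and
`B ∈ C_{w ≥ l+1}`, the rotated triangles show `A ∈ C_{w ≥ l}` and `B ∈ C_{w ≤ m}`. Induction on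
`m - l` puts `C_{[l,m]}` inside every extension-closed class containing the hearts. Conversely,
`C_{[l,m]}` contains the hearts, and it is retract- and extension-closed because `C_{w ≤ 0}` and
`C_{w ≥ 1}` are each other's orthogonals.
-/

open CategoryTheory Limits Pretriangulated Opposite

universe v u

variable (C : Type u) [Category.{v} C] [Preadditive C] [HasZeroObject C] [HasShift C ℤ]
  [∀ n : ℤ, (shiftFunctor C n).Additive] [Pretriangulated C]

/-- A weight structure on a triangulated category `C`, following Bondarko
(homological convention): retract-closed classes `le = C_{w ≤ 0}` and `ge = C_{w ≥ 0}`,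
semi-invariant under shifts, orthogonal, and admitting weight decompositions.
Membership of `X` in `C_{w ≤ i}` (resp. `C_{w ≥ i}`) is expressed as `X⟦-i⟧ ∈ le`
(resp. `X⟦-i⟧ ∈ ge`). -/
structure WeightStructure where
  le : Set C
  ge : Set C
  le_retract : ∀ ⦃X Y : C⦄, X ∈ le → ∀ (i : Y ⟶ X) (r : X ⟶ Y), i ≫ r = 𝟙 Y → Y ∈ le
  ge_retract : ∀ ⦃X Y : C⦄, X ∈ ge → ∀ (i : Y ⟶ X) (r : X ⟶ Y), i ≫ r = 𝟙 Y → Y ∈ ge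
  le_shift : ∀ ⦃X : C⦄, X ∈ le → X⟦(-1 : ℤ)⟧ ∈ le
  ge_shift : ∀ ⦃X : C⦄, X ∈ ge → X⟦(1 : ℤ)⟧ ∈ ge
  orthogonal : ∀ ⦃X Y : C⦄, X ∈ le → Y⟦(-1 : ℤ)⟧ ∈ ge → ∀ f : X ⟶ Y, f = 0
  decomp : ∀ M : C, ∃ (X Y : C) (f : X ⟶ M) (g : M ⟶ Y) (h : Y ⟶ X⟦(1 : ℤ)⟧),
    Triangle.mk f g h ∈ (distTriang C) ∧ X ∈ le ∧ Y⟦(-1 : ℤ)⟧ ∈ ge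

def IsRetractClosed {D : Type*} [Category D] (S : Set D) : Prop :=
  ∀ ⦃X Y : D⦄, X ∈ S → ∀ (i : Y ⟶ X) (r : X ⟶ Y), i ≫ r = 𝟙 Y → Y ∈ S

namespace IsRetractClosed

variable {D E : Type*} [Category D] [Category E] {S S' : Set D}

lemma mem_iff_of_iso (hS : IsRetractClosed S) {X Y : D} (e : X ≅ Y) : X ∈ S ↔ Y ∈ S :=
  ⟨fun hX => hS hX e.inv e.hom e.inv_hom_id, fun hY => hS hY e.hom e.inv e.hom_inv_id⟩

lemma inter (hS : IsRetractClosed S) (hS' : IsRetractClosed S') : IsRetractClosed (S ∩ S') :=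
  fun _ _ hX i r hir => ⟨hS hX.1 i r hir, hS' hX.2 i r hir⟩

lemma preimage {S : Set E} (hS : IsRetractClosed S) (F : D ⥤ E) :
    IsRetractClosed (F.obj ⁻¹' S) :=
  fun _ _ hX i r hir => hS hX (F.map i) (F.map r) (by rw [← F.map_comp, hir, F.map_id])

end IsRetractClosed

section

variable {C}

def IsExtensionClosed (S : Set C) : Prop :=
  ∀ T ∈ distTriang C, T.obj₁ ∈ S → T.obj₃ ∈ S → T.obj₂ ∈ S

namespace IsExtensionClosed

variable {S S' : Set C}

lemma inter (hS : IsExtensionClosed S) (hS' : IsExtensionClosed S') :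
    IsExtensionClosed (S ∩ S') :=
  fun T hT h₁ h₃ => ⟨hS T hT h₁.1 h₃.1, hS' T hT h₁.2 h₃.2⟩

lemma shift_preimage (hS : IsExtensionClosed S) (a : ℤ) :
    IsExtensionClosed {X : C | X⟦a⟧ ∈ S} :=
  fun T hT h₁ h₃ => hS _ (Triangle.shift_distinguished T hT a) h₁ h₃

end IsExtensionClosed

lemma Triangle.distinguished_of_iso_obj₂ {T : Triangle C} (hT : T ∈ distTriang C) {X : C}
    (e : T.obj₂ ≅ X) : Triangle.mk (T.mor₁ ≫ e.hom) (e.inv ≫ T.mor₂) T.mor₃ ∈ distTriang C :=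
  isomorphic_distinguished _ hT _
    (Triangle.isoMk _ _ (Iso.refl _) e.symm (Iso.refl _)
      (by simp [Triangle.mk]) (by simp [Triangle.mk]) (by simp [Triangle.mk]))

end

namespace WeightStructure

variable {C} (w : WeightStructure C)

/-- `C_{w ≤ n}` -/
def leAt (n : ℤ) : Set C := {X | X⟦-n⟧ ∈ w.le}

/-- `C_{w ≥ n}` -/
def geAt (n : ℤ) : Set C := {X | X⟦-n⟧ ∈ w.ge}

lemma isRetractClosed_le : IsRetractClosed w.le := w.le_retract

lemma isRetractClosed_ge : IsRetractClosed w.ge := w.ge_retract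

lemma isRetractClosed_leAt (n : ℤ) : IsRetractClosed (w.leAt n) :=
  w.isRetractClosed_le.preimage (shiftFunctor C (-n))

lemma isRetractClosed_geAt (n : ℤ) : IsRetractClosed (w.geAt n) :=
  w.isRetractClosed_ge.preimage (shiftFunctor C (-n))

lemma shift_shift_mem_le_iff {X : C} {a b c : ℤ} (h : a + b = c) :
    X⟦a⟧⟦b⟧ ∈ w.le ↔ X⟦c⟧ ∈ w.le :=
  (w.isRetractClosed_le.mem_iff_of_iso ((shiftFunctorAdd' C a b c h).app X)).symm

lemma shift_shift_mem_ge_iff {X : C} {a b c : ℤ} (h : a + b = c) :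
    X⟦a⟧⟦b⟧ ∈ w.ge ↔ X⟦c⟧ ∈ w.ge :=
  (w.isRetractClosed_ge.mem_iff_of_iso ((shiftFunctorAdd' C a b c h).app X)).symm

lemma shift_mem_leAt_iff {X : C} {a k n : ℤ} (h : k + a = n) : X⟦a⟧ ∈ w.leAt n ↔ X ∈ w.leAt k :=
  w.shift_shift_mem_le_iff (by omega)

lemma shift_mem_geAt_iff {X : C} {a k n : ℤ} (h : k + a = n) : X⟦a⟧ ∈ w.geAt n ↔ X ∈ w.geAt k :=
  w.shift_shift_mem_ge_iff (by omega)

lemma mem_leAt_zero_iff {X : C} : X ∈ w.leAt 0 ↔ X ∈ w.le :=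
  w.isRetractClosed_le.mem_iff_of_iso ((shiftFunctorZero' C (-0) neg_zero).app X)

lemma leAt_mono : Monotone w.leAt :=
  monotone_int_of_le_succ fun _ _ hX => (w.shift_shift_mem_le_iff (by omega)).1 (w.le_shift hX)

lemma geAt_anti : Antitone w.geAt :=
  antitone_int_of_succ_le fun _ _ hX => (w.shift_shift_mem_ge_iff (by omega)).1 (w.ge_shift hX)

lemma mem_le_iff {X : C} : X ∈ w.le ↔ ∀ Y ∈ w.geAt 1, ∀ f : X ⟶ Y, f = 0 := by
  refine ⟨fun hX Y hY f => w.orthogonal hX hY f, fun h => ?_⟩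
  obtain ⟨A, B, f, g, _, hT, hA, hB⟩ := w.decomp X
  obtain ⟨s, hs⟩ := Triangle.coyoneda_exact₂ _ hT (𝟙 X) (by rw [h B hB g]; exact comp_zero)
  exact w.le_retract hA s f hs.symm

lemma mem_geAt_one_iff {Y : C} : Y ∈ w.geAt 1 ↔ ∀ X ∈ w.le, ∀ f : X ⟶ Y, f = 0 := by
  refine ⟨fun hY X hX f => w.orthogonal hX hY f, fun h => ?_⟩
  obtain ⟨A, B, f, g, _, hT, hA, hB⟩ := w.decomp Y
  obtain ⟨r, hr⟩ := Triangle.yoneda_exact₂ _ hT (𝟙 Y) (by rw [h A hA f]; exact zero_comp)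
  exact w.isRetractClosed_geAt 1 hB g r hr.symm

lemma zero_mem_le {Z : C} (hZ : IsZero Z) : Z ∈ w.le :=
  w.mem_le_iff.2 fun _ _ _ => hZ.eq_of_src _ _

lemma zero_mem_geAt_one {Z : C} (hZ : IsZero Z) : Z ∈ w.geAt 1 :=
  w.mem_geAt_one_iff.2 fun _ _ _ => hZ.eq_of_tgt _ _

lemma zero_mem_leAt {Z : C} (n : ℤ) (hZ : IsZero Z) : Z ∈ w.leAt n :=
  w.zero_mem_le ((shiftFunctor C (-n)).map_isZero hZ)

lemma zero_mem_geAt {Z : C} (n : ℤ) (hZ : IsZero Z) : Z ∈ w.geAt n :=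
  (w.shift_mem_geAt_iff (by omega)).1
    (w.zero_mem_geAt_one ((shiftFunctor C (1 - n)).map_isZero hZ))

lemma isExtensionClosed_le : IsExtensionClosed w.le := fun T hT h₁ h₃ =>
  w.mem_le_iff.2 fun Y hY f => by
    obtain ⟨g, rfl⟩ := Triangle.yoneda_exact₂ _ hT f (w.orthogonal h₁ hY _)
    rw [w.orthogonal h₃ hY g, comp_zero]

lemma isExtensionClosed_geAt_one : IsExtensionClosed (w.geAt 1) := fun T hT h₁ h₃ =>
  w.mem_geAt_one_iff.2 fun X hX f => by
    obtain ⟨a, rfl⟩ := Triangle.coyoneda_exact₂ _ hT f (w.orthogonal hX h₃ _)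
    rw [w.orthogonal hX h₁ a, zero_comp]

lemma isExtensionClosed_leAt (n : ℤ) : IsExtensionClosed (w.leAt n) :=
  w.isExtensionClosed_le.shift_preimage (-n)

lemma isExtensionClosed_geAt (n : ℤ) : IsExtensionClosed (w.geAt n) := by
  have h : w.geAt n = {X | X⟦1 - n⟧ ∈ w.geAt 1} :=
    Set.ext fun _ => (w.shift_mem_geAt_iff (by omega)).symm
  rw [h]
  exact w.isExtensionClosed_geAt_one.shift_preimage (1 - n)

lemma exists_distTriang_mem_leAt_mem_geAt (X : C) (n : ℤ) :
    ∃ (A B : C) (f : A ⟶ X) (g : X ⟶ B) (h : B ⟶ A⟦(1 : ℤ)⟧),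
      Triangle.mk f g h ∈ distTriang C ∧ A ∈ w.leAt n ∧ B ∈ w.geAt (n + 1) := by
  obtain ⟨_, _, _, _, _, hT, hA, hB⟩ := w.decomp (X⟦-n⟧)
  exact ⟨_, _, _, _, _, Triangle.distinguished_of_iso_obj₂ (Triangle.shift_distinguished _ hT n)
      ((shiftFunctorCompIsoId C (-n) n (neg_add_cancel n)).app X),
    (w.shift_mem_leAt_iff (by dsimp only; omega)).2 (w.mem_leAt_zero_iff.2 hA),
    (w.shift_mem_geAt_iff (by dsimp only; omega)).2 hB⟩

lemma mem_of_mem_geAt_of_mem_leAt {S : Set C} (hS : IsExtensionClosed S) {l m : ℤ} (hlm : l ≤ m)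
    (hheart : ∀ j, l ≤ j → j ≤ m → ∀ X : C, X ∈ w.leAt j → X ∈ w.geAt j → X ∈ S)
    {X : C} (hl : X ∈ w.geAt l) (hm : X ∈ w.leAt m) : X ∈ S := by
  obtain rfl | hlt := hlm.eq_or_lt
  · exact hheart l le_rfl le_rfl X hm hl
  obtain ⟨A, B, _, _, _, hT, hA, hB⟩ := w.exists_distTriang_mem_leAt_mem_geAt X l
  have hA' : A ∈ w.geAt l := w.isExtensionClosed_geAt l _ (inv_rot_of_distTriang _ hT)
    ((w.shift_mem_geAt_iff (by omega)).2 hB) hl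
  have hB' : B ∈ w.leAt m := w.isExtensionClosed_leAt m _ (rot_of_distTriang _ hT) hm
    (w.leAt_mono hlt ((w.shift_mem_leAt_iff (by omega)).2 hA))
  exact hS _ hT (hheart l le_rfl hlm A hA hA')
    (mem_of_mem_geAt_of_mem_leAt hS hlt (fun j hj => hheart j (by omega)) hB hB')
termination_by (m - l).toNat

end WeightStructure

/-- `C_{[l,m]}` is the smallest retract-closed extension-closed
class of objects of `C` containing the hearts `C_{w=j}` for `l ≤ j ≤ m`. -/
theorem stmt12 (w : WeightStructure C) (l m : ℤ) (hlm : l ≤ m) :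
    {X : C | X⟦(-l : ℤ)⟧ ∈ w.ge ∧ X⟦(-m : ℤ)⟧ ∈ w.le} =
      ⋂ S ∈ {S : Set C |
        (∀ X : C, IsZero X → X ∈ S) ∧
        (∀ ⦃X Y : C⦄, X ∈ S → ∀ (i : Y ⟶ X) (r : X ⟶ Y), i ≫ r = 𝟙 Y → Y ∈ S) ∧
        (∀ (T : Triangle C), T ∈ (distTriang C) → T.obj₁ ∈ S → T.obj₃ ∈ S → T.obj₂ ∈ S) ∧
        (∀ j : ℤ, l ≤ j → j ≤ m →
          ∀ X : C, X⟦(-j : ℤ)⟧ ∈ w.le → X⟦(-j : ℤ)⟧ ∈ w.ge → X ∈ S)}, S := by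
  refine Set.Subset.antisymm ?_ (Set.biInter_subset_of_mem ⟨?_, ?_, ?_, ?_⟩)
  · refine Set.subset_iInter₂ fun S ⟨_, _, hSext, hSheart⟩ => ?_
    exact fun X ⟨hl, hm⟩ => w.mem_of_mem_geAt_of_mem_leAt hSext hlm hSheart hl hm
  · exact fun X hX => ⟨w.zero_mem_geAt l hX, w.zero_mem_leAt m hX⟩
  · exact (w.isRetractClosed_geAt l).inter (w.isRetractClosed_leAt m)
  · exact (w.isExtensionClosed_geAt l).inter (w.isExtensionClosed_leAt m)
  · exact fun j hlj hjm X hle hge => ⟨w.geAt_anti hlj hge, w.leAt_mono hjm hle⟩
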